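/- For finite families {μ_i} and {ν_j} of h-precomplete numberings: ⊕_i μ_i ≤^h ⊕_j ν_j if and only if ⊕_i μ_i ≤ ⊕_j ν_j. -/

import Mathlib

/-- Relativized partial recursiveness: `f` is partial recursive in the (total) oracle `O`. -/
inductive RecursiveInFn (O : ℕ → ℕ) : (ℕ →. ℕ) → Prop
  | oracle : RecursiveInFn O O
  | zero : RecursiveInFn O (pure 0)
  | succ : RecursiveInFn O Nat.succ
  | left : RecursiveInFn O ↑fun n : ℕ => n.unpair.1
  | right : RecursiveInFn O ↑fun n : ℕ => n.unpair.2
  | pair {f g} : RecursiveInFn O f → RecursiveInFn O g →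
      RecursiveInFn O fun n => Nat.pair <$> f n <*> g n
  | comp {f g} : RecursiveInFn O f → RecursiveInFn O g → RecursiveInFn O fun n => g n >>= f
  | prec {f g} : RecursiveInFn O f → RecursiveInFn O g → RecursiveInFn O (Nat.unpaired fun a n =>
      n.rec (f a) fun y IH => do let i ← IH; g (Nat.pair a (Nat.pair y i)))
  | rfind {f} : RecursiveInFn O f →
      RecursiveInFn O fun a => Nat.rfind fun n => (fun m => m = 0) <$> f (Nat.pair a n)

/-- Computable (many-one style) reducibility between numberings. -/
def NumRed {S : Type*} (μ ν : ℕ → S) : Prop :=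
  ∃ f : ℕ → ℕ, Computable f ∧ ∀ n, μ n = ν (f n)

/-- Reducibility between numberings via an `O`-computable total function. -/
def NumRedIn {S : Type*} (O : ℕ → ℕ) (μ ν : ℕ → S) : Prop :=
  ∃ f : ℕ → ℕ, RecursiveInFn O ↑f ∧ ∀ n, μ n = ν (f n)

/-- The join `μ ⊕ ν` of two numberings. -/
def NumJoin {S : Type*} (μ ν : ℕ → S) : ℕ → S :=
  fun n => if n % 2 = 0 then μ (n / 2) else ν (n / 2)

/-- `ν` is `O`-precomplete: every `O`-partial computable function has a total
computable `ν`-totalizer. -/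
def Precomplete {S : Type*} (O : ℕ → ℕ) (ν : ℕ → S) : Prop :=
  ∀ ψ : ℕ →. ℕ, RecursiveInFn O ψ →
    ∃ t : ℕ → ℕ, Computable t ∧ ∀ (x : ℕ) (hx : (ψ x).Dom), ν (t x) = ν ((ψ x).get hx)

/-- `ν` is `O`-complete with respect to `a`. -/
def CompleteAt {S : Type*} (O : ℕ → ℕ) (ν : ℕ → S) (a : S) : Prop :=
  ∀ ψ : ℕ →. ℕ, RecursiveInFn O ψ →
    ∃ t : ℕ → ℕ, Computable t ∧ (∀ (x : ℕ) (hx : (ψ x).Dom), ν (t x) = ν ((ψ x).get hx)) ∧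
      ∀ x : ℕ, ¬ (ψ x).Dom → ν (t x) = a

open Classical in
/-- The jump (halting problem) of a partial function `U`, as a 0-1 valued total function. -/
noncomputable def jumpOf (U : ℕ →. ℕ) : ℕ → ℕ :=
  fun x => if (U x).Dom then 1 else 0

open Classical in
/-- The operation `G(μ,ν,h)` defined from a universal `h`-partial computable function `U`:
`G⟨n,x⟩ = ν n` if `U x` diverges and `μ (U x)` if it converges. -/
noncomputable def GOp {S : Type*} (μ ν : ℕ → S) (U : ℕ →. ℕ) : ℕ → S :=
  fun m =>
    if hd : (U (Nat.unpair m).2).Dom then μ ((U (Nat.unpair m).2).get hd)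
    else ν (Nat.unpair m).1

/-- The join of a finite family of numberings: `(⊕_{i<p} μ_i)(x) = μ_{x mod p}(x div p)`. -/
def FinNumJoin {S : Type*} {p : ℕ} (hp : 0 < p) (μ : Fin p → ℕ → S) : ℕ → S :=
  fun x => μ ⟨x % p, Nat.mod_lt x hp⟩ (x / p)

/-!
An `h`-reduction of `⊕ᵢ μᵢ` to `⊕ⱼ νⱼ` restricts to an `h`-reduction of each `μᵢ`. Since `μᵢ` is
`h`-precomplete, Ershov's fixed point theorem (relativized) shows it is join-irreducible: given a
computable split of the indices of the target, one can redirect the reduction so that all its values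
lie on one side. Splitting off the columns of `⊕ⱼ νⱼ` one at a time yields `μᵢ ≤^h νⱼ` for some `j`,
and as `νⱼ` is `h`-precomplete a computable totalizer of this reduction gives `μᵢ ≤ νⱼ`. Finally
`⊕ᵢ μᵢ ≤ ⊕ⱼ νⱼ` by assembling these computable reductions.
-/

namespace RecursiveInFn

variable {O : ℕ → ℕ}

theorem of_eq {f g : ℕ →. ℕ} (hf : RecursiveInFn O f) (H : ∀ n, f n = g n) :
    RecursiveInFn O g :=
  funext H ▸ hf

theorem of_natPartrec {f : ℕ →. ℕ} (hf : Nat.Partrec f) : RecursiveInFn O f := by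
  induction hf with
  | zero => exact zero
  | succ => exact succ
  | left => exact left
  | right => exact right
  | pair _ _ ihf ihg => exact pair ihf ihg
  | comp _ _ ihf ihg => exact comp ihf ihg
  | prec _ _ ihf ihg => exact prec ihf ihg
  | rfind _ ihf => exact rfind ihf

theorem of_partrec {f : ℕ →. ℕ} (hf : Partrec f) : RecursiveInFn O f :=
  of_natPartrec (Partrec.nat_iff.1 hf)

theorem of_computable {f : ℕ → ℕ} (hf : Computable f) : RecursiveInFn O ↑f :=
  of_partrec hf.partrec

theorem comp_total {f g : ℕ → ℕ} (hf : RecursiveInFn O ↑f) (hg : RecursiveInFn O ↑g) :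
    RecursiveInFn O ↑(fun n => f (g n)) :=
  (comp hf hg).of_eq fun _ => Part.bind_some _ _

theorem pair_total {f g : ℕ → ℕ} (hf : RecursiveInFn O ↑f) (hg : RecursiveInFn O ↑g) :
    RecursiveInFn O ↑(fun n => Nat.pair (f n) (g n)) :=
  (pair hf hg).of_eq fun n => by simp [PFun.coe_val, Seq.seq]

theorem exists_total_search {P : ℕ → ℕ} (hP : RecursiveInFn O ↑P)
    (hex : ∀ a, ∃ b, P (Nat.pair a b) = 0) :
    ∃ s : ℕ → ℕ, RecursiveInFn O ↑s ∧ ∀ a, P (Nat.pair a (s a)) = 0 := by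
  have hdom (a : ℕ) :
      (Nat.rfind fun b => (fun m => m = 0) <$> (P : ℕ →. ℕ) (Nat.pair a b)).Dom := by
    obtain ⟨b, hb⟩ := hex a
    simp only [PFun.coe_val, Part.map_eq_map, Part.map_some]
    exact Nat.rfind_dom.2 ⟨b, by simpa using hb, fun _ => trivial⟩
  refine ⟨fun a => (Nat.rfind _).get (hdom a), (rfind hP).of_eq fun a => ?_, fun a => ?_⟩
  · simp [PFun.coe_val]
  · simpa [PFun.coe_val] using Nat.rfind_spec (Part.get_mem (hdom a))

end RecursiveInFn

theorem NumRed.numRedIn {S : Type*} {O : ℕ → ℕ} {μ σ : ℕ → S} (hred : NumRed μ σ) :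
    NumRedIn O μ σ :=
  let ⟨f, hf, hμf⟩ := hred
  ⟨f, .of_computable hf, hμf⟩

theorem NumRed.trans {S : Type*} {μ σ τ : ℕ → S} (hμσ : NumRed μ σ) (hστ : NumRed σ τ) :
    NumRed μ τ :=
  let ⟨f, hf, hμf⟩ := hμσ
  let ⟨g, hg, hσg⟩ := hστ
  ⟨fun n => g (f n), hg.comp hf, fun n => (hμf n).trans (hσg _)⟩

theorem NumRedIn.trans {S : Type*} {O : ℕ → ℕ} {μ σ τ : ℕ → S} (hμσ : NumRedIn O μ σ)
    (hστ : NumRedIn O σ τ) : NumRedIn O μ τ :=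
  let ⟨f, hf, hμf⟩ := hμσ
  let ⟨g, hg, hσg⟩ := hστ
  ⟨fun n => g (f n), hg.comp_total hf, fun n => (hμf n).trans (hσg _)⟩

theorem Precomplete.numRed_of_numRedIn {S : Type*} {O : ℕ → ℕ} {μ ν : ℕ → S}
    (hν : Precomplete O ν) (hred : NumRedIn O μ ν) : NumRed μ ν := by
  obtain ⟨f, hf, hμf⟩ := hred
  obtain ⟨t, ht, htf⟩ := hν f hf
  exact ⟨t, ht, fun n => (hμf n).trans (htf n trivial).symm⟩

open Nat.Partrec in
theorem Precomplete.exists_fixedPoint {S : Type*} {O : ℕ → ℕ} {μ : ℕ → S}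
    (hμ : Precomplete O μ) {ψ : ℕ → ℕ} (hψ : RecursiveInFn O ↑ψ) :
    ∃ q : ℕ → ℕ, Computable q ∧ ∀ m, μ (q m) = μ (ψ (Nat.pair m (q m))) := by
  -- `θ ⟨m, e⟩ = ψ ⟨m, φₑ ⟨m, e⟩⟩`; the fixed point is `q m = t ⟨m, e⟩` for a totalizer `t` of `θ`
  -- with index `e`.
  let θ : ℕ →. ℕ := fun z =>
    ((Denumerable.ofNat Code z.unpair.2).eval z).map (Nat.pair z.unpair.1) >>= (ψ : ℕ →. ℕ)
  have hθ : RecursiveInFn O θ := by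
    refine .comp hψ (.of_partrec ?_)
    exact (Code.eval_part.comp ((Computable.ofNat _).comp (Computable.snd.comp Computable.unpair))
      Computable.id).map
      (Primrec₂.natPair.comp ((Primrec.fst.comp Primrec.unpair).comp Primrec.fst)
        Primrec.snd).to_comp
  obtain ⟨t, ht, htθ⟩ := hμ θ hθ
  obtain ⟨e, he⟩ := Code.exists_code.1 (Partrec.nat_iff.1 ht.partrec)
  refine ⟨fun m => t (Nat.pair m (Encodable.encode e)),
    ht.comp (Primrec₂.natPair.comp Primrec.id (Primrec.const _)).to_comp, fun m => ?_⟩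
  have hθm : θ (Nat.pair m (Encodable.encode e)) =
      Part.some (ψ (Nat.pair m (t (Nat.pair m (Encodable.encode e))))) := by
    simp only [θ, Nat.unpair_pair, Denumerable.ofNat_encode, he, PFun.coe_val, Part.map_some]
    exact Part.bind_some _ _
  have hdom : (θ (Nat.pair m (Encodable.encode e))).Dom := by simp [hθm]
  rw [htθ _ hdom, Part.get_eq_of_mem (hθm ▸ Part.mem_some _) hdom]

def NumRedInWithin {S : Type*} (O : ℕ → ℕ) (μ σ : ℕ → S) (s : Set ℕ) : Prop :=
  ∃ f : ℕ → ℕ, RecursiveInFn O ↑f ∧ (∀ n, μ n = σ (f n)) ∧ ∀ n, f n ∈ s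

theorem NumRedInWithin.mono {S : Type*} {O : ℕ → ℕ} {μ σ : ℕ → S} {s t : Set ℕ}
    (hred : NumRedInWithin O μ σ s) (hst : s ⊆ t) : NumRedInWithin O μ σ t :=
  let ⟨f, hf, hμf, hfs⟩ := hred
  ⟨f, hf, hμf, fun n => hst (hfs n)⟩

theorem NumRedIn.numRedInWithin_univ {S : Type*} {O : ℕ → ℕ} {μ σ : ℕ → S}
    (hred : NumRedIn O μ σ) : NumRedInWithin O μ σ Set.univ :=
  let ⟨f, hf, hμf⟩ := hred
  ⟨f, hf, hμf, fun _ => trivial⟩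

theorem Precomplete.numRedInWithin_sep_or_sep_not {S : Type*} {O : ℕ → ℕ} {μ σ : ℕ → S}
    (hμ : Precomplete O μ) {s : Set ℕ} (hred : NumRedInWithin O μ σ s) {P : ℕ → Prop}
    (hP : ComputablePred P) :
    NumRedInWithin O μ σ {n ∈ s | P n} ∨ NumRedInWithin O μ σ {n ∈ s | ¬ P n} := by
  obtain ⟨F, hF, hμF, hFs⟩ := hred
  obtain ⟨_, hPdec⟩ := hP
  let test : ℕ → ℕ := fun n => cond (decide (P n)) 0 1
  have htest : Computable test := Computable.cond hPdec (Computable.const 0) (Computable.const 1)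
  have htest_eq_zero (n : ℕ) : test n = 0 ↔ P n := by by_cases h : P n <;> simp [test, h]
  -- With the fixed point `q` of `ψ`, `μ (q ⟨a, b⟩)` is `μ a` or `μ b` according as
  -- `F (q ⟨a, b⟩)` satisfies `P` or not. Either some `a` never reaches `P`, and
  -- `b ↦ F (q ⟨a, b⟩)` avoids `P`; or every `a` does, and an unbounded search for such a `b`
  -- gives a reduction into `P`.
  let ψ : ℕ → ℕ := fun w =>
    cond (decide (P (F w.unpair.2))) w.unpair.1.unpair.1 w.unpair.1.unpair.2
  have hψ : RecursiveInFn O ↑ψ := by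
    have hsel : Computable fun v : ℕ => cond (decide (P v.unpair.1)) v.unpair.2.unpair.1
        v.unpair.2.unpair.2 :=
      Computable.cond (hPdec.comp (Computable.fst.comp Computable.unpair))
        (Computable.fst.comp (Computable.unpair.comp (Computable.snd.comp Computable.unpair)))
        (Computable.snd.comp (Computable.unpair.comp (Computable.snd.comp Computable.unpair)))
    exact ((RecursiveInFn.of_computable hsel).comp_total (.pair_total
      (hF.comp_total (.of_computable (Computable.snd.comp Computable.unpair)))
      (.of_computable (Computable.fst.comp Computable.unpair)))).of_eq fun w => by simp [ψ]
  obtain ⟨q, hq, hfix⟩ := hμ.exists_fixedPoint hψ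
  have hqF : RecursiveInFn O ↑(fun w => F (q w)) := hF.comp_total (.of_computable hq)
  have hμq (a b : ℕ) : μ (q (Nat.pair a b)) = if P (F (q (Nat.pair a b))) then μ a else μ b := by
    rw [hfix]; by_cases h : P (F (q (Nat.pair a b))) <;> simp [ψ, h]
  by_cases hA : ∃ a, ∀ b, ¬ P (F (q (Nat.pair a b)))
  · obtain ⟨a, ha⟩ := hA
    refine .inr ⟨fun b => F (q (Nat.pair a b)),
      hqF.comp_total (.of_computable (Primrec₂.natPair.comp (Primrec.const a) Primrec.id).to_comp),
      fun b => ?_, fun b => ⟨hFs _, ha b⟩⟩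
    rw [← hμF, hμq, if_neg (ha b)]
  · push Not at hA
    obtain ⟨r, hr, hrP⟩ := RecursiveInFn.exists_total_search
      ((RecursiveInFn.of_computable htest).comp_total hqF) fun a => by
        simpa [htest_eq_zero] using hA a
    simp only [htest_eq_zero] at hrP
    refine .inl ⟨fun a => F (q (Nat.pair a (r a))),
      hqF.comp_total (.pair_total (.of_computable Computable.id) hr),
      fun a => ?_, fun a => ⟨hFs _, hrP a⟩⟩
    rw [← hμF, hμq, if_pos (hrP a)]

section FinNumJoin

variable {S : Type*} {l : ℕ} (hl : 0 < l) (ν : Fin l → ℕ → S)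

theorem finNumJoin_of_mod_eq {x : ℕ} {j : Fin l} (hx : x % l = j) :
    FinNumJoin hl ν x = ν j (x / l) := by
  rw [FinNumJoin, show (⟨x % l, Nat.mod_lt x hl⟩ : Fin l) = j from Fin.ext hx]

theorem finNumJoin_mul_add (a : ℕ) (j : Fin l) : FinNumJoin hl ν (l * a + j) = ν j a := by
  rw [finNumJoin_of_mod_eq hl ν (x := l * a + j) (j := j) (by simp [Nat.mod_eq_of_lt j.isLt]),
    Nat.mul_add_div hl, Nat.div_eq_of_lt j.isLt, add_zero]

theorem numRed_finNumJoin (j : Fin l) : NumRed (ν j) (FinNumJoin hl ν) :=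
  ⟨fun a => l * a + j,
    (Primrec.nat_add.comp (Primrec.nat_mul.comp (Primrec.const l) Primrec.id)
      (Primrec.const _)).to_comp,
    fun a => (finNumJoin_mul_add hl ν a j).symm⟩

theorem finNumJoin_numRed_of_forall {σ : ℕ → S} (hred : ∀ j, NumRed (ν j) σ) :
    NumRed (FinNumJoin hl ν) σ := by
  choose g hg hνg using hred
  -- The choice among the `l` reductions is made computable by tabulating them in a list.
  let table : ℕ → List ℕ := fun x => List.ofFn fun j => g j (x / l)
  have htable : Computable table := Computable.list_ofFn fun j =>
    (hg j).comp (Primrec.nat_div.comp Primrec.id (Primrec.const l)).to_comp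
  refine ⟨fun x => (table x).getD (x % l) 0,
    (Primrec.list_getD 0).to_comp.comp htable
      (Primrec.nat_mod.comp Primrec.id (Primrec.const l)).to_comp, fun x => ?_⟩
  have hx : x % l < l := Nat.mod_lt x hl
  simp [FinNumJoin, table, List.getD_eq_getElem?_getD, hx, hνg]

theorem NumRedInWithin.numRedIn_of_mod_eq {O : ℕ → ℕ} {μ : ℕ → S} {j : Fin l}
    (hred : NumRedInWithin O μ (FinNumJoin hl ν) {n | n % l = j}) : NumRedIn O μ (ν j) := by
  obtain ⟨f, hf, hμf, hfj⟩ := hred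
  refine ⟨fun n => f n / l,
    (RecursiveInFn.of_computable (Primrec.nat_div.comp Primrec.id (Primrec.const l)).to_comp
      ).comp_total hf, fun n => ?_⟩
  rw [hμf, finNumJoin_of_mod_eq hl ν (hfj n)]

/-- Join-irreducibility of precomplete numberings. -/
theorem Precomplete.exists_numRedIn_of_numRedIn_finNumJoin {O : ℕ → ℕ} {μ : ℕ → S}
    (hμ : Precomplete O μ) (hred : NumRedIn O μ (FinNumJoin hl ν)) : ∃ j, NumRedIn O μ (ν j) := by
  suffices ∀ J : Finset (Fin l), NumRedInWithin O μ (FinNumJoin hl ν) {n | ∃ j ∈ J, n % l = j} →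
      ∃ j, NumRedIn O μ (ν j) from
    this Finset.univ (hred.numRedInWithin_univ.mono fun n _ => ⟨⟨n % l, Nat.mod_lt n hl⟩, by simp⟩)
  intro J
  induction J using Finset.induction_on with
  | empty => exact fun ⟨f, _, _, hf⟩ => by simpa using hf 0
  | insert j J _ ih =>
    intro hJ
    have hdec : ComputablePred fun n => n % l = j := PrimrecPred.computablePred
      (Primrec.eq.comp (Primrec.nat_mod.comp Primrec.id (Primrec.const l)) (Primrec.const _))
    rcases hμ.numRedInWithin_sep_or_sep_not hJ hdec with hj | hrest
    · exact ⟨j, (hj.mono fun n hn => hn.2).numRedIn_of_mod_eq hl ν⟩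
    · refine ih (hrest.mono ?_)
      rintro n ⟨⟨i, hi, hni⟩, hnj⟩
      simp only [Finset.mem_insert] at hi
      rcases hi with rfl | hi
      · exact absurd hni hnj
      · exact ⟨i, hi, hni⟩

end FinNumJoin

/-- for finite families of `h`-precomplete numberings,
`⊕ᵢ μᵢ ≤^h ⊕ⱼ νⱼ` iff `⊕ᵢ μᵢ ≤ ⊕ⱼ νⱼ`. -/
theorem finJoin_precomplete_redIn_iff_red {S : Type*} (h : ℕ → ℕ) {p l : ℕ}
    (hp : 0 < p) (hl : 0 < l) (μ : Fin p → ℕ → S) (ν : Fin l → ℕ → S)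
    (hμ : ∀ i, Precomplete h (μ i)) (hν : ∀ j, Precomplete h (ν j)) :
    NumRedIn h (FinNumJoin hp μ) (FinNumJoin hl ν) ↔
      NumRed (FinNumJoin hp μ) (FinNumJoin hl ν) := by
  refine ⟨fun hred => finNumJoin_numRed_of_forall hp μ fun i => ?_, NumRed.numRedIn⟩
  obtain ⟨j, hj⟩ := (hμ i).exists_numRedIn_of_numRedIn_finNumJoin hl ν
    ((numRed_finNumJoin hp μ i).numRedIn.trans hred)
  exact ((hν j).numRed_of_numRedIn hj).trans (numRed_finNumJoin hl ν j)
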